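/- Let A = P/I be a QL-ring with standard bases f₁,…,f_m of I and r¹,…,r^s of the relation module R ⊆ P^m, let x ∈ m with x ∉ I, and let P[m/x] be the subring of the fraction field generated by P and all a/x for a ∈ m. Then the relation module S = {(p₁,…,p_m) ∈ P[m/x]^m : Σ p_i · (f_i/x²) = 0 in P[m/x]} is generated over P[m/x] by r¹/x, …, r^s/x. -/
import Mathlib


open IsLocalRing Submodule

/-- The `m`-adic order `ord(m, M)(z) = sup {n : z ∈ mⁿM}` (valued in `ℕ∞`). -/
noncomputable def mord (R : Type*) {M : Type*} [CommRing R] [IsLocalRing R]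
    [AddCommGroup M] [Module R M] (z : M) : ℕ∞ :=
  sSup ((fun n : ℕ => (n : ℕ∞)) ''
    {n : ℕ | z ∈ (maximalIdeal R) ^ n • (⊤ : Submodule R M)})

/-- `v` is a standard basis of `N ⊆ M` with orders `d`: the `v i` generate `N` and their
initial forms generate the associated graded submodule `G(m, N ⊆ M)`. -/
def IsStandardBasis (R : Type*) {M : Type*} [CommRing R] [IsLocalRing R]
    [AddCommGroup M] [Module R M] (N : Submodule R M) {t : ℕ} (v : Fin t → M)
    (d : Fin t → ℕ) : Prop :=
  (∀ i, v i ∈ N) ∧ Submodule.span R (Set.range v) = N ∧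
    ∀ n : ℕ, ∀ z ∈ ((maximalIdeal R) ^ n • (⊤ : Submodule R M)) ⊓ N,
      ∃ a : Fin t → R, (∀ i, a i ∈ (maximalIdeal R) ^ (n - d i)) ∧
        z - ∑ i, a i • v i ∈ (maximalIdeal R) ^ (n + 1) • (⊤ : Submodule R M)

/-- The chart ring `P[m/x]`: the subring of the fraction field of `P` generated by (the
image of) `P` and the elements `a/x` for `a` in the maximal ideal. -/
noncomputable def chartSubring (P : Type*) [CommRing P] [IsLocalRing P] [IsDomain P]
    (x : P) : Subalgebra P (FractionRing P) :=
  Algebra.adjoin P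
    {y : FractionRing P | ∃ a ∈ maximalIdeal P,
      y * algebraMap P (FractionRing P) x = algebraMap P (FractionRing P) a}

section aux

variable {P : Type*} [CommRing P] [IsLocalRing P] [IsDomain P] {x : P}

lemma chart_exists_rep (hxm : x ∈ maximalIdeal P) {y : FractionRing P}
    (hy : y ∈ chartSubring P x) :
    ∃ (N : ℕ) (b : P), b ∈ (maximalIdeal P) ^ N ∧
      y * (algebraMap P (FractionRing P) x) ^ N = algebraMap P (FractionRing P) b := by
  induction hy using Algebra.adjoin_induction with
  | mem y hy =>
      obtain ⟨a, ha, hya⟩ := hy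
      exact ⟨1, a, by simpa using ha, by simpa using hya⟩
  | algebraMap r => exact ⟨0, r, by simp⟩
  | add y z hy hz ihy ihz =>
      obtain ⟨N, b, hb, hyb⟩ := ihy
      obtain ⟨M, c, hc, hzc⟩ := ihz
      refine ⟨N + M, b * x ^ M + c * x ^ N, ?_, ?_⟩
      · refine add_mem ?_ ?_
        · exact (pow_add (maximalIdeal P) N M) ▸
            Ideal.mul_mem_mul hb (Ideal.pow_mem_pow hxm M)
        · rw [add_comm N M, pow_add]
          exact Ideal.mul_mem_mul hc (Ideal.pow_mem_pow hxm N)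
      · have h1 : (y + z) * (algebraMap P (FractionRing P) x) ^ (N + M) =
            (y * (algebraMap P (FractionRing P) x) ^ N) *
              (algebraMap P (FractionRing P) x) ^ M +
            (z * (algebraMap P (FractionRing P) x) ^ M) *
              (algebraMap P (FractionRing P) x) ^ N := by ring
        rw [h1, hyb, hzc, map_add, map_mul, map_mul, map_pow, map_pow]
  | mul y z hy hz ihy ihz =>
      obtain ⟨N, b, hb, hyb⟩ := ihy
      obtain ⟨M, c, hc, hzc⟩ := ihz
      refine ⟨N + M, b * c, (pow_add (maximalIdeal P) N M) ▸ Ideal.mul_mem_mul hb hc, ?_⟩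
      have h1 : (y * z) * (algebraMap P (FractionRing P) x) ^ (N + M) =
          (y * (algebraMap P (FractionRing P) x) ^ N) *
            (z * (algebraMap P (FractionRing P) x) ^ M) := by ring
      rw [h1, hyb, hzc, map_mul]

lemma chart_of_rep (hx0 : x ≠ 0) {N : ℕ} {b : P} (hb : b ∈ (maximalIdeal P) ^ N) :
    algebraMap P (FractionRing P) b / (algebraMap P (FractionRing P) x) ^ N
      ∈ chartSubring P x := by
  have hX0 : algebraMap P (FractionRing P) x ≠ 0 := by
    simpa using (map_ne_zero_iff _ (IsFractionRing.injective P (FractionRing P))).mpr hx0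
  induction N generalizing b with
  | zero => simpa using Subalgebra.algebraMap_mem _ b
  | succ N ih =>
      rw [pow_succ] at hb
      refine Submodule.mul_induction_on hb (fun a ha c hc => ?_) (fun u v ihu ihv => ?_)
      case _ =>
          have : algebraMap P (FractionRing P) (a * c) /
              (algebraMap P (FractionRing P) x) ^ (N + 1) =
            (algebraMap P (FractionRing P) a / (algebraMap P (FractionRing P) x) ^ N) *
              (algebraMap P (FractionRing P) c / algebraMap P (FractionRing P) x) := by
            rw [map_mul, pow_succ, div_mul_div_comm]
          rw [this]
          refine mul_mem (ih ha) (Algebra.subset_adjoin ?_)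
          exact ⟨c, hc, by field_simp⟩
      case _ =>
          rw [map_add, add_div]
          exact add_mem ihu ihv

lemma pi_mem_smul_top {P : Type*} [CommRing P] {m : ℕ} (J : Ideal P)
    (v : Fin m → P) (hv : ∀ i, v i ∈ J) : v ∈ J • (⊤ : Submodule P (Fin m → P)) := by
  have h : v = ∑ i, v i • (Pi.single i (1 : P) : Fin m → P) := by
    ext j
    simp [Finset.sum_apply, Pi.single_apply]
  rw [h]
  exact Submodule.sum_mem _ fun i _ => Submodule.smul_mem_smul (hv i) trivial

end aux

/-- Lemma IR (ii): for a QL-ring `A = P/I` with standard bases `f` (of `I`,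
order 2) and `r` (of the relation module, order 1), and `x ∈ m`, `x ∉ I`, every relation
`(p₁,…,p_m)` with entries in `P[m/x]` among the `fᵢ/x²` is a `P[m/x]`-combination of the
relations `r¹/x, …, r^s/x`.  All elements are regarded inside the fraction field of `P`. -/
theorem ql_relations_blowup
    (P : Type*) [CommRing P] [IsLocalRing P] [IsNoetherianRing P] [IsDomain P] [Algebra ℂ P]
    (I : Ideal P) (hIprime : I.IsPrime)
    {m s : ℕ} (f : Fin m → P) (r : Fin s → (Fin m → P))
    (Rel : Submodule P (Fin m → P))
    (hRel : ∀ p : Fin m → P, p ∈ Rel ↔ ∑ i, p i * f i = 0)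
    (hford : ∀ j, mord P (f j) = 2)
    (hrord : ∀ k, mord P (r k) = 1)
    (hfstd : IsStandardBasis P (I : Submodule P P) f (fun _ => 2))
    (hrstd : IsStandardBasis P Rel r (fun _ => 1))
    (hindf : LinearIndependent ℂ
      (fun j => Ideal.Quotient.mk ((maximalIdeal P) ^ 3) (f j)))
    (hindr : LinearIndependent ℂ
      (fun k => (Submodule.Quotient.mk (r k) :
        (Fin m → P) ⧸ ((maximalIdeal P) ^ 2 • (⊤ : Submodule P (Fin m → P))))))
    (x : P) (hxm : x ∈ maximalIdeal P) (hxI : x ∉ I) :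
    ∀ p : Fin m → FractionRing P,
      (∀ i, p i ∈ chartSubring P x) →
      (∑ i, p i * (algebraMap P (FractionRing P) (f i)
          / (algebraMap P (FractionRing P) x) ^ 2) = 0) →
      ∃ q : Fin s → FractionRing P,
        (∀ k, q k ∈ chartSubring P x) ∧
        ∀ i, p i = ∑ k, q k *
          (algebraMap P (FractionRing P) (r k i)
            / algebraMap P (FractionRing P) x) := by
  intro p hp hrel
  have hx0 : x ≠ 0 := fun h => hxI (h ▸ I.zero_mem)
  set φ := algebraMap P (FractionRing P) with hφ
  have hX0 : φ x ≠ 0 :=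
    (map_ne_zero_iff _ (IsFractionRing.injective P (FractionRing P))).mpr hx0
  choose Ni bi hbi hpbi using fun i => chart_exists_rep hxm (hp i)
  set n : ℕ := Finset.univ.sup Ni with hn
  set N : ℕ := n + 1 with hN
  have hNi : ∀ i, Ni i ≤ N :=
    fun i => le_trans (Finset.le_sup (Finset.mem_univ i)) (Nat.le_succ n)
  set B : Fin m → P := fun i => bi i * x ^ (N - Ni i) with hBdef
  have hBm : ∀ i, B i ∈ (maximalIdeal P) ^ N := by
    intro i
    have h1 : Ni i + (N - Ni i) = N := Nat.add_sub_cancel' (hNi i)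
    show bi i * x ^ (N - Ni i) ∈ (maximalIdeal P) ^ N
    rw [show (maximalIdeal P) ^ N =
      (maximalIdeal P) ^ (Ni i) * (maximalIdeal P) ^ (N - Ni i) by rw [← pow_add, h1]]
    exact Ideal.mul_mem_mul (hbi i) (Ideal.pow_mem_pow hxm _)
  have hpB : ∀ i, p i * φ x ^ N = φ (B i) := by
    intro i
    show p i * φ x ^ N = φ (bi i * x ^ (N - Ni i))
    rw [map_mul, map_pow, ← hpbi i]
    conv_lhs => rw [show N = Ni i + (N - Ni i) from (Nat.add_sub_cancel' (hNi i)).symm, pow_add]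
    ring
  have hsum : ∑ i, B i * f i = 0 := by
    apply IsFractionRing.injective P (FractionRing P)
    rw [map_sum, map_zero]
    have h2 : ∀ i, φ (B i * f i) = p i * (φ (f i) / φ x ^ 2) * φ x ^ (N + 2) := by
      intro i
      rw [map_mul, ← hpB i, pow_add]
      field_simp
      ring
    rw [Finset.sum_congr rfl fun i _ => h2 i, ← Finset.sum_mul, hrel, zero_mul]
  have hBRel : B ∈ Rel := (hRel B).mpr hsum
  have main : ∀ j : ℕ, ∃ c : Fin s → P, (∀ k, c k ∈ (maximalIdeal P) ^ n) ∧
      B - ∑ k, c k • r k ∈ (maximalIdeal P) ^ (N + j) • (⊤ : Submodule P (Fin m → P)) := by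
    intro j
    induction j with
    | zero => exact ⟨0, fun k => zero_mem _, by simpa using pi_mem_smul_top _ B hBm⟩
    | succ j ih =>
        obtain ⟨c, hc, hz⟩ := ih
        have hzRel : B - ∑ k, c k • r k ∈ Rel :=
          sub_mem hBRel (Submodule.sum_mem _ fun k _ => Submodule.smul_mem _ _ (hrstd.1 k))
        obtain ⟨a, ha, hrem⟩ := hrstd.2.2 (N + j) _ (Submodule.mem_inf.mpr ⟨hz, hzRel⟩)
        have ha' : ∀ k, a k ∈ (maximalIdeal P) ^ (N + j - 1) := fun k => ha k
        refine ⟨c + a, fun k => add_mem (hc k)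
          (Ideal.pow_le_pow_right (by omega) (ha' k)), ?_⟩
        have h3 : B - ∑ k, (c + a) k • r k =
            (B - ∑ k, c k • r k) - ∑ k, a k • r k := by
          simp only [Pi.add_apply, add_smul, Finset.sum_add_distrib]
          abel
        rw [h3]
        exact hrem
  set C : Submodule P (Fin m → P) :=
    (maximalIdeal P) ^ n • Submodule.span P (Set.range r) with hC
  have hBC : B ∈ C := by
    have hker : ∀ j : ℕ, C.mkQ B ∈
        (maximalIdeal P) ^ j • (⊤ : Submodule P ((Fin m → P) ⧸ C)) := by
      intro j
      obtain ⟨c, hc, hz⟩ := main j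
      have hmem : (∑ k, c k • r k) ∈ C :=
        Submodule.sum_mem _ fun k _ =>
          Submodule.smul_mem_smul (hc k) (Submodule.subset_span ⟨k, rfl⟩)
      have h0 : C.mkQ (∑ k, c k • r k) = 0 := (Submodule.Quotient.mk_eq_zero C).mpr hmem
      have h1 : C.mkQ B = C.mkQ (B - ∑ k, c k • r k) := by
        rw [map_sub, h0, sub_zero]
      have hle : Submodule.map C.mkQ ((maximalIdeal P) ^ (N + j) • ⊤) ≤
          (maximalIdeal P) ^ j • (⊤ : Submodule P ((Fin m → P) ⧸ C)) := by
        rw [Submodule.map_smul'']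
        exact Submodule.smul_mono (Ideal.pow_le_pow_right (by omega)) le_top
      rw [h1]
      exact hle (Submodule.mem_map_of_mem hz)
    have hbot : (⨅ j : ℕ, (maximalIdeal P) ^ j • ⊤ :
        Submodule P ((Fin m → P) ⧸ C)) = ⊥ :=
      Ideal.iInf_pow_smul_eq_bot_of_isLocalRing (maximalIdeal P)
        (Ideal.IsMaximal.ne_top inferInstance)
    have h4 : C.mkQ B ∈ (⨅ j : ℕ, (maximalIdeal P) ^ j • ⊤ :
        Submodule P ((Fin m → P) ⧸ C)) := Submodule.mem_iInf _ |>.mpr hker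
    rw [hbot, Submodule.mem_bot] at h4
    exact (Submodule.Quotient.mk_eq_zero C).mp h4
  rw [hC] at hBC
  obtain ⟨a, ha, haB⟩ := (Submodule.mem_ideal_smul_span_iff_exists_sum _ r B).mp hBC
  have haB' : ∑ k, a k • r k = B := by
    rw [← haB, Finsupp.sum_fintype]
    exact fun k => zero_smul P _
  refine ⟨fun k => φ (a k) / φ x ^ n, fun k => chart_of_rep hx0 (ha k), ?_⟩
  intro i
  have hBi : B i = ∑ k, a k * r k i := by
    rw [← haB']
    simp [Finset.sum_apply]
  have hpin : p i = φ (B i) / φ x ^ N := by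
    rw [← hpB i]
    field_simp
  rw [hpin, hBi, map_sum, Finset.sum_div]
  exact Finset.sum_congr rfl fun k _ => by
    rw [map_mul, hN, pow_succ, div_mul_div_comm]
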